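/- Let n ≥ 1, let D be a real n×n diagonal matrix with every diagonal entry ≥ d for some d > 0, let τ > 0, and let F ∈ ℝⁿ. Let 𝒞 ⊆ ℝⁿ and let Ã be a function from ℝⁿ to real n×n matrices such that for every P ∈ 𝒞 the matrix D + τÃ(P) is invertible; define φ(P) = (D + τÃ(P))⁻¹F. Suppose there are constants C ≥ 0 and C_L ≥ 1 such that for all P, Q ∈ 𝒞: ‖Ã(P)‖_{∞,op} ≤ C, ‖φ(P)‖_∞ ≤ C, and ‖Ã(P) − Ã(Q)‖_{∞,op} ≤ C_L ‖P − Q‖_∞. Set τ_C = d/(2 C_L C). Then for every τ with 0 < τ < τ_C, the map φ is a contraction on 𝒞: for all P, Q ∈ 𝒞, ‖φ(P) − φ(Q)‖_∞ ≤ α ‖P − Q‖_∞ with contraction constant α = 2 C_L C τ / d ∈ (0, 1). -/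

import Mathlib

open Matrix BigOperators

/-- The maximum norm `‖v‖_∞ = max_k |v_k|` of a vector in `ℝⁿ`. -/
def vecInfNorm {n : ℕ} [NeZero n] (v : Fin n → ℝ) : ℝ :=
  Finset.univ.sup' Finset.univ_nonempty fun k => |v k|

/-- The operator norm induced by `‖·‖_∞`, i.e. the maximum absolute row sum
`‖M‖_{∞,op} = max_i ∑_j |M_{ij}|`. -/
def matInfNorm {n : ℕ} [NeZero n] (M : Matrix (Fin n) (Fin n) ℝ) : ℝ :=
  Finset.univ.sup' Finset.univ_nonempty fun i => ∑ j, |M i j|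

/-!
Subtracting the defining equations of `φ(P)` and `φ(Q)` gives
`(D + τÃ(P)) (φ(P) - φ(Q)) = τ (Ã(Q) - Ã(P)) φ(Q)`. In the max norm a diagonal matrix with
entries `≥ d` stretches every vector by at least `d`, so
`(d - τC) ‖φ(P) - φ(Q)‖ ≤ τ C_L C ‖P - Q‖`, and `τ < τ_C` together with `C_L ≥ 1` gives
`d - τC ≥ d / 2`.
-/

open scoped Matrix.Norms.Operator

lemma vecInfNorm_eq_norm {n : ℕ} [NeZero n] (v : Fin n → ℝ) : vecInfNorm v = ‖v‖ := by
  rw [vecInfNorm, Pi.norm_def, ← Finset.sup'_eq_sup Finset.univ_nonempty,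
    Finset.apply_sup'_eq_sup'_comp _ _ fun _ _ => NNReal.coe_max _ _]
  exact Finset.sup'_congr _ rfl fun _ _ => by simp

lemma matInfNorm_eq_norm {n : ℕ} [NeZero n] (A : Matrix (Fin n) (Fin n) ℝ) :
    matInfNorm A = ‖A‖ := by
  rw [matInfNorm, Matrix.linfty_opNorm_def, ← Finset.sup'_eq_sup Finset.univ_nonempty,
    Finset.apply_sup'_eq_sup'_comp _ _ fun _ _ => NNReal.coe_max _ _]
  exact Finset.sup'_congr _ rfl fun _ _ => by simp

lemma Matrix.mulVec_nonsing_inv_mulVec_sub {ι R : Type*} [Fintype ι] [DecidableEq ι]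
    [CommRing R] {M N : Matrix ι ι R} (hM : IsUnit M.det) (hN : IsUnit N.det) (F : ι → R) :
    M *ᵥ (M⁻¹ *ᵥ F - N⁻¹ *ᵥ F) = (N - M) *ᵥ (N⁻¹ *ᵥ F) := by
  rw [mulVec_sub, sub_mulVec, mulVec_mulVec, mulVec_mulVec, mulVec_mulVec,
    mul_nonsing_inv _ hM, mul_nonsing_inv _ hN]

section DiagonalPerturbation

variable {ι : Type*} [Fintype ι] [DecidableEq ι] {d : ℝ} {dv : ι → ℝ}

lemma mul_norm_le_norm_diagonal_mulVec (hd : 0 ≤ d) (hdv : ∀ k, d ≤ dv k) (x : ι → ℝ) :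
    d * ‖x‖ ≤ ‖diagonal dv *ᵥ x‖ := by
  rw [← Real.norm_of_nonneg hd, ← norm_smul]
  refine (pi_norm_le_iff_of_nonneg (norm_nonneg _)).2 fun k => ?_
  refine le_trans ?_ (norm_le_pi_norm _ k)
  simp only [Pi.smul_apply, smul_eq_mul, mulVec_diagonal, norm_mul, Real.norm_of_nonneg hd]
  gcongr
  exact (hdv k).trans (le_abs_self _)

lemma sub_mul_norm_le_of_diagonal_add_smul_mulVec_eq (hd : 0 ≤ d) (hdv : ∀ k, d ≤ dv k)
    {τ : ℝ} (hτ : 0 ≤ τ) (A : Matrix ι ι ℝ) {x y : ι → ℝ}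
    (h : (diagonal dv + τ • A) *ᵥ x = y) : (d - τ * ‖A‖) * ‖x‖ ≤ ‖y‖ := by
  have hD : diagonal dv *ᵥ x = y - τ • (A *ᵥ x) := by
    rw [← h, add_mulVec, smul_mulVec, add_sub_cancel_right]
  have hAx : ‖τ • (A *ᵥ x)‖ ≤ τ * ‖A‖ * ‖x‖ := by
    rw [norm_smul, Real.norm_of_nonneg hτ, mul_assoc]
    exact mul_le_mul_of_nonneg_left (linfty_opNorm_mulVec A x) hτ
  have := mul_norm_le_norm_diagonal_mulVec hd hdv x
  rw [hD] at this
  linarith [norm_sub_le y (τ • (A *ᵥ x))]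

lemma sub_mul_norm_inv_mulVec_sub_le (hd : 0 ≤ d) (hdv : ∀ k, d ≤ dv k) {τ : ℝ} (hτ : 0 ≤ τ)
    {A B : Matrix ι ι ℝ} (hA : IsUnit (diagonal dv + τ • A).det)
    (hB : IsUnit (diagonal dv + τ • B).det) (F : ι → ℝ) :
    (d - τ * ‖A‖) * ‖(diagonal dv + τ • A)⁻¹ *ᵥ F - (diagonal dv + τ • B)⁻¹ *ᵥ F‖
      ≤ τ * ‖A - B‖ * ‖(diagonal dv + τ • B)⁻¹ *ᵥ F‖ := by
  refine (sub_mul_norm_le_of_diagonal_add_smul_mulVec_eq hd hdv hτ A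
    (mulVec_nonsing_inv_mulVec_sub hA hB F)).trans ?_
  rw [add_sub_add_left_eq_sub, ← smul_sub, smul_mulVec, norm_smul, Real.norm_of_nonneg hτ,
    mul_assoc, norm_sub_rev]
  exact mul_le_mul_of_nonneg_left (linfty_opNorm_mulVec _ _) hτ

end DiagonalPerturbation

theorem gummel_map_contraction_general
    (n : ℕ) [NeZero n] (d : ℝ) (hd : 0 < d)
    (dv : Fin n → ℝ) (hdv : ∀ k, d ≤ dv k)
    (τ : ℝ) (F : Fin n → ℝ) (𝒞 : Set (Fin n → ℝ))
    (Atil : (Fin n → ℝ) → Matrix (Fin n) (Fin n) ℝ)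
    (hinv : ∀ P ∈ 𝒞, IsUnit (Matrix.diagonal dv + τ • Atil P).det)
    (C CL : ℝ) (hCL : 1 ≤ CL)
    (hAbound : ∀ P ∈ 𝒞, matInfNorm (Atil P) ≤ C)
    (hphibound : ∀ P ∈ 𝒞,
      vecInfNorm ((Matrix.diagonal dv + τ • Atil P)⁻¹ *ᵥ F) ≤ C)
    (hLip : ∀ P ∈ 𝒞, ∀ Q ∈ 𝒞,
      matInfNorm (Atil P - Atil Q) ≤ CL * vecInfNorm (P - Q))
    (hτ : 0 < τ) (hτC : τ < d / (2 * CL * C)) :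
    (0 < 2 * CL * C * τ / d ∧ 2 * CL * C * τ / d < 1) ∧
    ∀ P ∈ 𝒞, ∀ Q ∈ 𝒞,
      vecInfNorm ((Matrix.diagonal dv + τ • Atil P)⁻¹ *ᵥ F
          - (Matrix.diagonal dv + τ • Atil Q)⁻¹ *ᵥ F)
        ≤ (2 * CL * C * τ / d) * vecInfNorm (P - Q) := by
  -- `τ_C > τ > 0` forces `C > 0`; for `C = 0` the threshold is the junk value `d / 0 = 0`.
  have hC : 0 < C := by
    by_contra! hC
    have : d / (2 * CL * C) ≤ 0 := div_nonpos_of_nonneg_of_nonpos hd.le (by nlinarith)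
    linarith
  have hα : 2 * CL * C * τ < d := by
    have := (lt_div_iff₀ (by positivity)).1 hτC
    linarith
  refine ⟨⟨by positivity, (div_lt_one hd).2 hα⟩, fun P hP Q hQ => ?_⟩
  simp only [vecInfNorm_eq_norm, matInfNorm_eq_norm] at hAbound hphibound hLip ⊢
  have hdiff := sub_mul_norm_inv_mulVec_sub_le hd.le hdv hτ.le (hinv P hP) (hinv Q hQ) F
  set Δ := (diagonal dv + τ • Atil P)⁻¹ *ᵥ F - (diagonal dv + τ • Atil Q)⁻¹ *ᵥ F
  have hτC_half : τ * C ≤ d / 2 := by nlinarith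
  have key : d / 2 * ‖Δ‖ ≤ τ * (CL * ‖P - Q‖) * C :=
    calc d / 2 * ‖Δ‖ ≤ (d - τ * ‖Atil P‖) * ‖Δ‖ := by
          gcongr
          nlinarith [hAbound P hP]
      _ ≤ τ * ‖Atil P - Atil Q‖ * ‖(diagonal dv + τ • Atil Q)⁻¹ *ᵥ F‖ := hdiff
      _ ≤ τ * (CL * ‖P - Q‖) * C := by
          gcongr
          · exact hLip P hP Q hQ
          · exact hphibound Q hQ
  rw [div_mul_eq_mul_div, le_div_iff₀ hd]
  linarith

/-- the Gummel fixed-point map `φ(P) = (D + τ Ã(P))⁻¹ F` is a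
contraction on `𝒞` with constant `α = 2 C_L C τ / d ∈ (0,1)` whenever
`0 < τ < τ_C = d / (2 C_L C)`. -/
theorem gummel_map_contraction
    (n : ℕ) [NeZero n] (d : ℝ) (hd : 0 < d)
    (dv : Fin n → ℝ) (hdv : ∀ k, d ≤ dv k)
    (τ : ℝ) (F : Fin n → ℝ) (𝒞 : Set (Fin n → ℝ))
    (Atil : (Fin n → ℝ) → Matrix (Fin n) (Fin n) ℝ)
    (hinv : ∀ P ∈ 𝒞, IsUnit (Matrix.diagonal dv + τ • Atil P).det)
    (C CL : ℝ) (hC : 0 ≤ C) (hCL : 1 ≤ CL)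
    (hAbound : ∀ P ∈ 𝒞, matInfNorm (Atil P) ≤ C)
    (hphibound : ∀ P ∈ 𝒞,
      vecInfNorm ((Matrix.diagonal dv + τ • Atil P)⁻¹ *ᵥ F) ≤ C)
    (hLip : ∀ P ∈ 𝒞, ∀ Q ∈ 𝒞,
      matInfNorm (Atil P - Atil Q) ≤ CL * vecInfNorm (P - Q))
    (hτ : 0 < τ) (hτC : τ < d / (2 * CL * C)) :
    (0 < 2 * CL * C * τ / d ∧ 2 * CL * C * τ / d < 1) ∧
    ∀ P ∈ 𝒞, ∀ Q ∈ 𝒞,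
      vecInfNorm ((Matrix.diagonal dv + τ • Atil P)⁻¹ *ᵥ F
          - (Matrix.diagonal dv + τ • Atil Q)⁻¹ *ᵥ F)
        ≤ (2 * CL * C * τ / d) * vecInfNorm (P - Q) :=
  gummel_map_contraction_general n d hd dv hdv τ F 𝒞 Atil hinv C CL hCL hAbound hphibound hLip hτ
    hτC
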